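/- arXiv:1310.0178 — 5 statements merged into one kernel-verified Lean document; each statement's English description precedes it below -/
import Mathlib

section
/- After increasing the cost of edge {b,d} by Δ, every minimum u-v-cut of the original graph that does not separate b and d remains a minimum u-v-cut in the new graph, with the same cost. -/
open Finset

variable {V : Type*}

/-- Cost of the cut given by side `S`: sum of costs of ordered pairs crossing the cut. -/
def cutCost [Fintype V] [DecidableEq V] (c : V → V → NNReal) (S : Finset V) : NNReal :=
  ∑ x ∈ S, ∑ y ∈ Sᶜ, c x y

/-- Minimum `u`-`v`-cut value. -/
noncomputable def minCut [Fintype V] [DecidableEq V] (c : V → V → NNReal) (u v : V) : NNReal :=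
  sInf {w : NNReal | ∃ S : Finset V, u ∈ S ∧ v ∉ S ∧ cutCost c S = w}

theorem minCut_preserved_increase [Fintype V] [DecidableEq V] (c cp : V → V → NNReal)
    (hsymm : ∀ x y, c x y = c y x) (b d : V) (hbd : b ≠ d)
    (Δ : NNReal) (hΔpos : 0 < Δ)
    (h_agree : ∀ x y : V, ¬((x = b ∧ y = d) ∨ (x = d ∧ y = b)) → cp x y = c x y)
    (h_bd : cp b d = c b d + Δ) (h_db : cp d b = c b d + Δ)
    (u v : V) (S : Finset V) (huS : u ∈ S) (hvS : v ∉ S)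
    (hmin : cutCost c S = minCut c u v) (hsep : b ∈ S ↔ d ∈ S) :
    cutCost cp S = cutCost c S ∧ cutCost cp S = minCut cp u v := by
  have heq : cutCost cp S = cutCost c S := by
    unfold cutCost
    refine Finset.sum_congr rfl fun x hx => Finset.sum_congr rfl fun y hy => ?_
    apply h_agree
    rintro (⟨rfl, rfl⟩ | ⟨rfl, rfl⟩)
    · exact (Finset.mem_compl.mp hy) (hsep.mp hx)
    · exact (Finset.mem_compl.mp hy) (hsep.mpr hx)
  refine ⟨heq, ?_⟩
  have hle : ∀ T : Finset V, cutCost c T ≤ cutCost cp T := by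
    intro T
    refine Finset.sum_le_sum fun x _ => Finset.sum_le_sum fun y _ => ?_
    by_cases h : (x = b ∧ y = d) ∨ (x = d ∧ y = b)
    · rcases h with ⟨hx, hy⟩ | ⟨hx, hy⟩
      · rw [hx, hy, h_bd]; exact le_self_add
      · rw [hx, hy, h_db, hsymm d b]; exact le_self_add
    · rw [h_agree x y h]
  have h1 : minCut cp u v ≤ cutCost cp S := csInf_le (OrderBot.bddBelow _) ⟨S, huS, hvS, rfl⟩
  have h2 : minCut c u v ≤ minCut cp u v := by
    apply le_csInf
    · exact ⟨cutCost cp S, S, huS, hvS, rfl⟩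
    rintro w ⟨T, hT1, hT2, rfl⟩
    exact le_trans (csInf_le (OrderBot.bddBelow _) ⟨T, hT1, hT2, rfl⟩) (hle T)
  rw [heq, hmin]
  exact le_antisymm h2 (by rw [← hmin, ← heq]; exact h1)
end

section
/- After decreasing the cost of edge {b,d} by Δ, every minimum u-v-cut of the original graph that separates b and d remains a minimum u-v-cut in the new graph, and its new cost is λ(u,v) − Δ. -/
open Finset

variable {V : Type*}

/-! The original cost is the decreased one plus `Δ` on the single edge `{b, d}`, and a cut pays
that extra `Δ` exactly when it separates `b` and `d`. So every `u`-`v`-cut gets cheaper by at most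
`Δ`, while a minimum cut separating `b` and `d` gets cheaper by exactly `Δ` and stays minimum. -/

section
variable [DecidableEq V]

def edgeWeight (b d : V) (Δ : NNReal) (x y : V) : NNReal :=
  if s(x, y) = s(b, d) then Δ else 0

theorem edgeWeight_comm (b d : V) (Δ : NNReal) : edgeWeight b d Δ = edgeWeight d b Δ := by
  ext x y
  simp only [edgeWeight, Sym2.eq_swap]

section
variable [Fintype V]

theorem cutCost_add (c₁ c₂ : V → V → NNReal) (S : Finset V) :
    cutCost (c₁ + c₂) S = cutCost c₁ S + cutCost c₂ S := by
  simp only [cutCost, Pi.add_apply, sum_add_distrib]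

theorem cutCost_edgeWeight_of_mem_of_notMem {b d : V} (Δ : NNReal) {S : Finset V} (hb : b ∈ S)
    (hd : d ∉ S) : cutCost (edgeWeight b d Δ) S = Δ := by
  have hd' : d ∈ Sᶜ := mem_compl.2 hd
  calc cutCost (edgeWeight b d Δ) S = ∑ x ∈ S, ∑ y ∈ Sᶜ, if x = b ∧ y = d then Δ else 0 := by
        refine sum_congr rfl fun x hx => sum_congr rfl fun y _ => ?_
        have : ¬(x = d ∧ y = b) := fun h => hd (h.1 ▸ hx)
        simp only [edgeWeight, Sym2.eq_iff, this, or_false]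
    _ = Δ := by simp [ite_and, hb, hd']

theorem cutCost_edgeWeight_of_mem_iff {b d : V} (Δ : NNReal) {S : Finset V}
    (h : b ∈ S ↔ d ∈ S) : cutCost (edgeWeight b d Δ) S = 0 := by
  refine sum_eq_zero fun x hx => sum_eq_zero fun y hy => if_neg ?_
  rw [mem_compl] at hy
  rw [Sym2.eq_iff]
  rintro (⟨rfl, rfl⟩ | ⟨rfl, rfl⟩)
  · exact hy (h.1 hx)
  · exact hy (h.2 hx)

theorem cutCost_edgeWeight (b d : V) (Δ : NNReal) (S : Finset V) :
    cutCost (edgeWeight b d Δ) S = if Xor (b ∈ S) (d ∈ S) then Δ else 0 := by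
  by_cases hb : b ∈ S <;> by_cases hd : d ∈ S
  · simp [cutCost_edgeWeight_of_mem_iff Δ (iff_of_true hb hd), hb, hd]
  · simp [cutCost_edgeWeight_of_mem_of_notMem Δ hb hd, hb, hd]
  · simp [edgeWeight_comm b, cutCost_edgeWeight_of_mem_of_notMem Δ hd hb, hb, hd]
  · simp [cutCost_edgeWeight_of_mem_iff Δ (iff_of_false hb hd), hb, hd]

theorem minCut_le_cutCost (c : V → V → NNReal) {u v : V} {T : Finset V} (hu : u ∈ T)
    (hv : v ∉ T) : minCut c u v ≤ cutCost c T :=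
  csInf_le (OrderBot.bddBelow _) ⟨T, hu, hv, rfl⟩

theorem cutCost_eq_minCut_iff (c : V → V → NNReal) {u v : V} {S : Finset V} (hu : u ∈ S)
    (hv : v ∉ S) :
    cutCost c S = minCut c u v ↔ ∀ T : Finset V, u ∈ T → v ∉ T → cutCost c S ≤ cutCost c T := by
  refine ⟨fun h T huT hvT => h ▸ minCut_le_cutCost c huT hvT, fun h => ?_⟩
  refine le_antisymm (le_csInf ⟨_, S, hu, hv, rfl⟩ ?_) (minCut_le_cutCost c hu hv)
  rintro _ ⟨T, huT, hvT, rfl⟩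
  exact h T huT hvT

end

theorem eq_add_edgeWeight_of_decrease {c cm : V → V → NNReal} (hsymm : ∀ x y, c x y = c y x)
    {b d : V} {Δ : NNReal} (hΔ : Δ ≤ c b d)
    (h_agree : ∀ x y : V, ¬((x = b ∧ y = d) ∨ (x = d ∧ y = b)) → cm x y = c x y)
    (h_bd : cm b d = c b d - Δ) (h_db : cm d b = c b d - Δ) :
    c = cm + edgeWeight b d Δ := by
  ext x y
  by_cases h : s(x, y) = s(b, d)
  · rw [Pi.add_apply, Pi.add_apply, edgeWeight, if_pos h]
    rcases Sym2.eq_iff.1 h with ⟨rfl, rfl⟩ | ⟨rfl, rfl⟩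
    · rw [h_bd, tsub_add_cancel_of_le hΔ]
    · rw [h_db, tsub_add_cancel_of_le hΔ, hsymm]
  · rw [Pi.add_apply, Pi.add_apply, edgeWeight, if_neg h, add_zero, h_agree x y]
    rwa [Sym2.eq_iff] at h

end

theorem minCut_preserved_decrease_separating_general [Fintype V] [DecidableEq V]
    (c cm : V → V → NNReal)
    (hsymm : ∀ x y, c x y = c y x) (b d : V)
    (Δ : NNReal) (hΔ : Δ ≤ c b d)
    (h_agree : ∀ x y : V, ¬((x = b ∧ y = d) ∨ (x = d ∧ y = b)) → cm x y = c x y)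
    (h_bd : cm b d = c b d - Δ) (h_db : cm d b = c b d - Δ)
    (u v : V) (S : Finset V) (huS : u ∈ S) (hvS : v ∉ S)
    (hmin : cutCost c S = minCut c u v) (hsep : Xor' (b ∈ S) (d ∈ S)) :
    cutCost cm S = minCut cm u v ∧ cutCost cm S = minCut c u v - Δ := by
  have hcost : ∀ T, cutCost c T = cutCost cm T + if Xor (b ∈ T) (d ∈ T) then Δ else 0 := by
    intro T
    rw [eq_add_edgeWeight_of_decrease hsymm hΔ h_agree h_bd h_db, cutCost_add, cutCost_edgeWeight]
  have hS : cutCost c S = cutCost cm S + Δ := by rw [hcost, if_pos (show Xor _ _ from hsep)]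
  have hopt : ∀ T : Finset V, u ∈ T → v ∉ T → cutCost cm S ≤ cutCost cm T := by
    intro T huT hvT
    refine le_of_add_le_add_right (a := Δ) ?_
    calc cutCost cm S + Δ = cutCost c S := hS.symm
      _ ≤ cutCost c T := (cutCost_eq_minCut_iff c huS hvS).1 hmin T huT hvT
      _ ≤ cutCost cm T + Δ := by rw [hcost]; split_ifs <;> simp
  refine ⟨(cutCost_eq_minCut_iff cm huS hvS).2 hopt, ?_⟩
  rw [← hmin, hS, add_tsub_cancel_right]

theorem minCut_preserved_decrease_separating [Fintype V] [DecidableEq V]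
    (c cm : V → V → NNReal)
    (hsymm : ∀ x y, c x y = c y x) (b d : V) (hbd : b ≠ d)
    (Δ : NNReal) (hΔpos : 0 < Δ) (hΔ : Δ ≤ c b d)
    (h_agree : ∀ x y : V, ¬((x = b ∧ y = d) ∨ (x = d ∧ y = b)) → cm x y = c x y)
    (h_bd : cm b d = c b d - Δ) (h_db : cm d b = c b d - Δ)
    (u v : V) (S : Finset V) (huS : u ∈ S) (hvS : v ∉ S)
    (hmin : cutCost c S = minCut c u v) (hsep : Xor' (b ∈ S) (d ∈ S)) :
    cutCost cm S = minCut cm u v ∧ cutCost cm S = minCut c u v - Δ :=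
  minCut_preserved_decrease_separating_general c cm hsymm b d Δ hΔ h_agree h_bd h_db u v S huS hvS
    hmin hsep
end

section
/- Subtree preservation lemma: Let U ⊆ V be a minimum u-v-cut side in G⁻ (after decreasing c(b,d)) with b, d ∉ U. Then for any g, h ∈ U, if S is a minimum g-h-cut in G that does not separate b and d, S remains a minimum g-h-cut in G⁻: λ⁻(g,h) = λ(g,h). -/
open Finset

variable {V : Type*}

lemma minCut_le [Fintype V] [DecidableEq V] (c : V → V → NNReal) {u v : V} {S : Finset V}
    (hu : u ∈ S) (hv : v ∉ S) : minCut c u v ≤ cutCost c S :=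
  csInf_le (OrderBot.bddBelow _) ⟨S, hu, hv, rfl⟩

lemma le_minCut [Fintype V] [DecidableEq V] (c : V → V → NNReal) {u v : V} (huv : u ≠ v)
    {w : NNReal} (hw : ∀ S : Finset V, u ∈ S → v ∉ S → w ≤ cutCost c S) :
    w ≤ minCut c u v := by
  apply le_csInf
  · exact ⟨cutCost c {u}, {u}, mem_singleton_self u, by simp [Ne.symm huv], rfl⟩
  · rintro x ⟨S, hu, hv, rfl⟩
    exact hw S hu hv

lemma cutCost_compl [Fintype V] [DecidableEq V] {c : V → V → NNReal}
    (hsymm : ∀ x y, c x y = c y x) (S : Finset V) : cutCost c Sᶜ = cutCost c S := by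
  unfold cutCost
  rw [compl_compl, Finset.sum_comm]
  exact Finset.sum_congr rfl fun x _ => Finset.sum_congr rfl fun y _ => hsymm y x

lemma cutCost_eq_sum [Fintype V] [DecidableEq V] (c : V → V → NNReal) (S : Finset V) :
    cutCost c S = ∑ x : V, ∑ y : V, if x ∈ S ∧ y ∉ S then c x y else 0 := by
  unfold cutCost
  rw [← Finset.sum_filter_add_sum_filter_not Finset.univ (· ∈ S)]
  have h1 : ∀ x : V, (∑ y : V, if x ∈ S ∧ y ∉ S then c x y else 0)
      = if x ∈ S then ∑ y ∈ Sᶜ, c x y else 0 := by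
    intro x
    by_cases hx : x ∈ S
    · simp only [hx, if_true, true_and]
      rw [← Finset.sum_filter]
      congr 1
      ext y; simp [Finset.mem_compl]
    · simp [hx]
  simp only [h1]
  rw [Finset.sum_filter_add_sum_filter_not Finset.univ (· ∈ S)]
  rw [Finset.sum_ite_mem, Finset.univ_inter]

lemma cutCost_submodular [Fintype V] [DecidableEq V] (c : V → V → NNReal) (T U : Finset V) :
    cutCost c (T ∩ U) + cutCost c (T ∪ U) ≤ cutCost c T + cutCost c U := by
  simp only [cutCost_eq_sum]
  rw [← Finset.sum_add_distrib, ← Finset.sum_add_distrib]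
  refine Finset.sum_le_sum fun x _ => ?_
  rw [← Finset.sum_add_distrib, ← Finset.sum_add_distrib]
  refine Finset.sum_le_sum fun y _ => ?_
  by_cases hxT : x ∈ T <;> by_cases hxU : x ∈ U <;>
    by_cases hyT : y ∈ T <;> by_cases hyU : y ∈ U <;>
    simp [hxT, hxU, hyT, hyU, Finset.mem_inter, Finset.mem_union]

/-- If `b` and `d` are on the same side of `S`, then `cm` and `c` cuts agree. -/
lemma cutCost_agree [Fintype V] [DecidableEq V] {c cm : V → V → NNReal} {b d : V}
    (h_agree : ∀ x y : V, ¬((x = b ∧ y = d) ∨ (x = d ∧ y = b)) → cm x y = c x y)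
    {S : Finset V} (hSsep : b ∈ S ↔ d ∈ S) : cutCost cm S = cutCost c S := by
  unfold cutCost
  refine Finset.sum_congr rfl fun x hx => Finset.sum_congr rfl fun y hy => ?_
  rw [Finset.mem_compl] at hy
  apply h_agree
  rintro (⟨rfl, rfl⟩ | ⟨rfl, rfl⟩)
  · exact hy (hSsep.mp hx)
  · exact hy (hSsep.mpr hx)

theorem subtree_preservation [Fintype V] [DecidableEq V] (c cm : V → V → NNReal)
    (hsymm : ∀ x y, c x y = c y x) (b d : V) (hbd : b ≠ d)
    (Δ : NNReal) (hΔpos : 0 < Δ) (hΔ : Δ ≤ c b d)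
    (h_agree : ∀ x y : V, ¬((x = b ∧ y = d) ∨ (x = d ∧ y = b)) → cm x y = c x y)
    (h_bd : cm b d = c b d - Δ) (h_db : cm d b = c b d - Δ)
    (u v : V) (U : Finset V) (huU : u ∈ U) (hvU : v ∉ U) (hbU : b ∉ U) (hdU : d ∉ U)
    (hUmin : cutCost cm U = minCut cm u v)
    (g h : V) (hgU : g ∈ U) (hhU : h ∈ U) (hgh : g ≠ h)
    (S : Finset V) (hgS : g ∈ S) (hhS : h ∉ S)
    (hSmin : cutCost c S = minCut c g h) (hSsep : b ∈ S ↔ d ∈ S) :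
    cutCost cm S = minCut cm g h ∧ minCut cm g h = minCut c g h := by
  -- cm is symmetric
  have hcmsymm : ∀ x y, cm x y = cm y x := by
    intro x y
    by_cases hx : (x = b ∧ y = d) ∨ (x = d ∧ y = b)
    · rcases hx with ⟨rfl, rfl⟩ | ⟨rfl, rfl⟩ <;> rw [h_bd, h_db]
    · have hy : ¬((y = b ∧ x = d) ∨ (y = d ∧ x = b)) := by tauto
      rw [h_agree x y hx, h_agree y x hy, hsymm]
  have hSm : cutCost cm S = cutCost c S := cutCost_agree h_agree hSsep
  -- minCut cm g h ≤ minCut c g h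
  have h1 : minCut cm g h ≤ minCut c g h := by
    calc minCut cm g h ≤ cutCost cm S := minCut_le cm hgS hhS
    _ = cutCost c S := hSm
    _ = minCut c g h := hSmin
  -- minCut c g h ≤ minCut cm g h
  have h2 : minCut c g h ≤ minCut cm g h := by
    apply le_minCut cm hgh
    intro T hgT hhT
    by_cases hvT : v ∈ T
    · -- use T' = T ∪ Uᶜ, via submodularity on T and Uᶜ
      have hsub := cutCost_submodular cm T Uᶜ
      rw [cutCost_compl hcmsymm U] at hsub
      -- T ∩ Uᶜ = T \ U ; its complement is a u-v cut
      have hcut : cutCost cm U ≤ cutCost cm (T ∩ Uᶜ) := by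
        rw [hUmin, ← cutCost_compl hcmsymm (T ∩ Uᶜ)]
        apply minCut_le
        · simp [huU]
        · simp [hvT, hvU]
      have hle : cutCost cm (T ∪ Uᶜ) ≤ cutCost cm T := by
        have := add_le_add hcut (le_refl (cutCost cm (T ∪ Uᶜ)))
        have h3 : cutCost cm U + cutCost cm (T ∪ Uᶜ) ≤ cutCost cm T + cutCost cm U := by
          calc cutCost cm U + cutCost cm (T ∪ Uᶜ)
              ≤ cutCost cm (T ∩ Uᶜ) + cutCost cm (T ∪ Uᶜ) :=
                add_le_add hcut le_rfl
            _ ≤ cutCost cm T + cutCost cm U := hsub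
        have h4 : cutCost cm (T ∪ Uᶜ) + cutCost cm U ≤ cutCost cm T + cutCost cm U := by
          rwa [add_comm (cutCost cm U)] at h3
        exact le_of_add_le_add_right h4
      have hsep : b ∈ (T ∪ Uᶜ) ↔ d ∈ (T ∪ Uᶜ) := by
        simp [Finset.mem_union, Finset.mem_compl, hbU, hdU]
      calc minCut c g h ≤ cutCost c (T ∪ Uᶜ) := by
            apply minCut_le
            · simp [hgT]
            · simp [hhT, hhU]
        _ = cutCost cm (T ∪ Uᶜ) := (cutCost_agree h_agree hsep).symm
        _ ≤ cutCost cm T := hle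
    · -- use T' = T ∩ U, via submodularity on T and U
      have hsub := cutCost_submodular cm T U
      have hcut : cutCost cm U ≤ cutCost cm (T ∪ U) := by
        rw [hUmin]
        apply minCut_le
        · simp [huU]
        · simp [hvT, hvU]
      have hle : cutCost cm (T ∩ U) ≤ cutCost cm T := by
        have h3 : cutCost cm (T ∩ U) + cutCost cm U ≤ cutCost cm T + cutCost cm U :=
          le_trans (add_le_add le_rfl hcut) hsub
        exact le_of_add_le_add_right h3
      have hsep : b ∈ (T ∩ U) ↔ d ∈ (T ∩ U) := by
        simp [Finset.mem_inter, hbU, hdU]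
      calc minCut c g h ≤ cutCost c (T ∩ U) := by
            apply minCut_le
            · simp [hgT, hgU]
            · simp [hhT]
        _ = cutCost cm (T ∩ U) := (cutCost_agree h_agree hsep).symm
        _ ≤ cutCost cm T := hle
  have heq : minCut cm g h = minCut c g h := le_antisymm h1 h2
  exact ⟨by rw [hSm, hSmin, heq], heq⟩
end

section
/- Cut-bending theorem (union form): Let X be a minimum x-y-cut side in G with x ∈ X and b, d ∉ X. Let U be any set separating b and d, and suppose x ∈ U and y ∉ U (U separates x,y). Then cost_{c⁻}(U ∪ X) ≤ cost_{c⁻}(U), where c⁻ is c with c(b,d) decreased by Δ. -/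
open Finset

variable {V : Type*}

lemma cutCost_eq [Fintype V] [DecidableEq V] (c : V → V → NNReal) (S : Finset V) :
    cutCost c S = ∑ u : V, ∑ v : V, if u ∈ S ∧ v ∉ S then c u v else 0 := by
  unfold cutCost
  have h1 : ∀ u, (∑ v : V, if u ∈ S ∧ v ∉ S then c u v else 0)
      = if u ∈ S then ∑ v ∈ Sᶜ, c u v else 0 := by
    intro u
    by_cases hu : u ∈ S
    · rw [if_pos hu, ← Finset.sum_filter]
      apply Finset.sum_congr _ fun _ _ => rfl
      ext v; simp [hu]
    · simp [hu]
  rw [Finset.sum_congr rfl fun u _ => h1 u, Finset.sum_ite_mem,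
    Finset.univ_inter]

theorem cut_bending_union [Fintype V] [DecidableEq V] (c cm : V → V → NNReal)
    (hsymm : ∀ x y, c x y = c y x) (b d : V) (hbd : b ≠ d)
    (Δ : NNReal) (hΔpos : 0 < Δ) (hΔ : Δ ≤ c b d)
    (h_agree : ∀ x y : V, ¬((x = b ∧ y = d) ∨ (x = d ∧ y = b)) → cm x y = c x y)
    (h_bd : cm b d = c b d - Δ) (h_db : cm d b = c b d - Δ)
    (x y : V) (X : Finset V) (hxX : x ∈ X) (hyX : y ∉ X) (hbX : b ∉ X) (hdX : d ∉ X)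
    (hXmin : cutCost c X = minCut c x y)
    (U : Finset V) (hUsep : Xor' (b ∈ U) (d ∈ U)) (hxU : x ∈ U) (hyU : y ∉ U) :
    cutCost cm (U ∪ X) ≤ cutCost cm U := by
  -- cm agrees with c on cuts not separating b and d
  have hagree : ∀ (S : Finset V), b ∉ S → d ∉ S → cutCost cm S = cutCost c S := by
    intro S hb hd
    refine Finset.sum_congr rfl fun u hu => Finset.sum_congr rfl fun v hv => ?_
    apply h_agree
    rintro (⟨rfl, rfl⟩ | ⟨rfl, rfl⟩) <;> [exact hb hu; exact hd hu]
  have hXcm : cutCost cm X = cutCost c X := hagree X hbX hdX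
  have hIcm : cutCost cm (U ∩ X) = cutCost c (U ∩ X) := by
    apply hagree <;> simp [hbX, hdX]
  -- min cut bound
  have hmin : minCut c x y ≤ cutCost c (U ∩ X) := by
    apply csInf_le (OrderBot.bddBelow _)
    exact ⟨U ∩ X, Finset.mem_inter.mpr ⟨hxU, hxX⟩, fun h => hyX (Finset.mem_inter.mp h).2, rfl⟩
  have hXle : cutCost cm X ≤ cutCost cm (U ∩ X) := by
    rw [hXcm, hIcm, hXmin]; exact hmin
  -- submodularity
  have hsub : cutCost cm (U ∪ X) + cutCost cm (U ∩ X) ≤ cutCost cm U + cutCost cm X := by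
    rw [cutCost_eq, cutCost_eq, cutCost_eq, cutCost_eq, ← Finset.sum_add_distrib,
      ← Finset.sum_add_distrib]
    refine Finset.sum_le_sum fun u _ => ?_
    rw [← Finset.sum_add_distrib, ← Finset.sum_add_distrib]
    refine Finset.sum_le_sum fun v _ => ?_
    by_cases h1 : u ∈ U <;> by_cases h2 : u ∈ X <;> by_cases h3 : v ∈ U <;>
      by_cases h4 : v ∈ X <;> simp [h1, h2, h3, h4]
  have : cutCost cm (U ∪ X) + cutCost cm X ≤ cutCost cm U + cutCost cm X := by
    calc cutCost cm (U ∪ X) + cutCost cm X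
        ≤ cutCost cm (U ∪ X) + cutCost cm (U ∩ X) := by gcongr
      _ ≤ cutCost cm U + cutCost cm X := hsub
  exact le_of_add_le_add_right this
end

section
/- Cut-bending theorem (difference form): Let X be a minimum x-y-cut side in G with x ∈ X and b, d ∉ X. Let U be any set separating b and d with x ∉ U (U does not separate x,y when also y ∉ U). Then cost_{c⁻}(U \ X) ≤ cost_{c⁻}(U). -/
open Finset

variable {V : Type*}

/-!
For a symmetric cost, the cut function is posimodular:
`cost(U \ X) + cost(X \ U) ≤ cost(U) + cost(X)`. Since `x ∉ U`, the set `X \ U` is again an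
`x`-`y` cut side, so minimality of `X` gives `cost(X) ≤ cost(X \ U)` and hence
`cost_c(U \ X) ≤ cost_c(U)`. Both `U` and `U \ X` separate `b` and `d` (as `b, d ∉ X`), so lowering
`c(b,d)` by `Δ` lowers both costs by exactly `Δ`.
-/

section

variable [Fintype V] [DecidableEq V]

theorem cutCost_eq_sum_ite (c : V → V → NNReal) (S : Finset V) :
    cutCost c S = ∑ u, ∑ v, if u ∈ S ∧ v ∉ S then c u v else 0 := by
  simp only [cutCost, ite_and, ← Finset.mem_compl, Finset.sum_ite_irrel, Finset.sum_const_zero,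
    Fintype.sum_ite_mem]

theorem two_mul_cutCost {c : V → V → NNReal} (hsymm : ∀ u v, c u v = c v u) (S : Finset V) :
    2 * cutCost c S = ∑ u, ∑ v, if Xor (u ∈ S) (v ∈ S) then c u v else 0 := by
  have h_swap : cutCost c S = ∑ u, ∑ v, if v ∈ S ∧ u ∉ S then c u v else 0 := by
    rw [cutCost_eq_sum_ite, Finset.sum_comm]
    simp only [hsymm]
  rw [two_mul]
  nth_rw 1 [cutCost_eq_sum_ite]
  rw [h_swap, ← Finset.sum_add_distrib]
  refine Finset.sum_congr rfl fun u _ => ?_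
  rw [← Finset.sum_add_distrib]
  refine Finset.sum_congr rfl fun v _ => ?_
  by_cases hu : u ∈ S <;> by_cases hv : v ∈ S <;> simp [hu, hv]

-- Doubling counts each crossing pair in both orientations; on such symmetric sums
-- posimodularity holds term by term.
theorem cutCost_sdiff_add_cutCost_sdiff_le {c : V → V → NNReal} (hsymm : ∀ u v, c u v = c v u)
    (U X : Finset V) : cutCost c (U \ X) + cutCost c (X \ U) ≤ cutCost c U + cutCost c X := by
  rw [← mul_le_mul_iff_right₀ (two_pos : (0 : NNReal) < 2), mul_add, mul_add,
    two_mul_cutCost hsymm, two_mul_cutCost hsymm, two_mul_cutCost hsymm, two_mul_cutCost hsymm,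
    ← Finset.sum_add_distrib, ← Finset.sum_add_distrib]
  refine Finset.sum_le_sum fun u _ => ?_
  rw [← Finset.sum_add_distrib, ← Finset.sum_add_distrib]
  refine Finset.sum_le_sum fun v _ => ?_
  by_cases huU : u ∈ U <;> by_cases huX : u ∈ X <;> by_cases hvU : v ∈ U <;>
    by_cases hvX : v ∈ X <;> simp [huU, huX, hvU, hvX]

theorem minCut_le_cutCost_s17 (c : V → V → NNReal) {x y : V} {S : Finset V} (hx : x ∈ S) (hy : y ∉ S) :
    minCut c x y ≤ cutCost c S :=
  csInf_le (OrderBot.bddBelow _) ⟨S, hx, hy, rfl⟩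

theorem cutCost_eq_add_of_mem_of_notMem {c cm : V → V → NNReal} {p q : V} {Δ : NNReal}
    (h_agree : ∀ u v, ¬((u = p ∧ v = q) ∨ (u = q ∧ v = p)) → cm u v = c u v)
    (h_pq : c p q = cm p q + Δ) {S : Finset V} (hp : p ∈ S) (hq : q ∉ S) :
    cutCost c S = cutCost cm S + Δ := by
  have h_pointwise : ∀ u ∈ S, ∀ v ∈ Sᶜ, c u v = cm u v + if u = p ∧ v = q then Δ else 0 := by
    intro u hu v hv
    by_cases h : u = p ∧ v = q
    · rw [if_pos h, h.1, h.2, h_pq]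
    · rw [if_neg h, add_zero, h_agree u v]
      rintro (h' | ⟨rfl, -⟩)
      exacts [h h', hq hu]
  rw [cutCost, cutCost, Finset.sum_congr rfl fun u hu => Finset.sum_congr rfl (h_pointwise u hu)]
  simp [Finset.sum_add_distrib, ite_and, hp, hq]

theorem cutCost_eq_add_of_separates {c cm : V → V → NNReal} {p q : V} {Δ : NNReal}
    (h_agree : ∀ u v, ¬((u = p ∧ v = q) ∨ (u = q ∧ v = p)) → cm u v = c u v)
    (h_pq : c p q = cm p q + Δ) (h_qp : c q p = cm q p + Δ) {S : Finset V}
    (hS : Xor (p ∈ S) (q ∈ S)) : cutCost c S = cutCost cm S + Δ := by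
  rcases hS with ⟨hp, hq⟩ | ⟨hq, hp⟩
  · exact cutCost_eq_add_of_mem_of_notMem h_agree h_pq hp hq
  · exact cutCost_eq_add_of_mem_of_notMem (fun u v h => h_agree u v (h ∘ Or.symm)) h_qp hq hp

theorem cutCost_sdiff_le_of_eq_minCut {c : V → V → NNReal} (hsymm : ∀ u v, c u v = c v u)
    {x y : V} {X U : Finset V} (hxX : x ∈ X) (hyX : y ∉ X) (hXmin : cutCost c X = minCut c x y)
    (hxU : x ∉ U) : cutCost c (U \ X) ≤ cutCost c U := by
  have hX_le : cutCost c X ≤ cutCost c (X \ U) :=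
    hXmin ▸ minCut_le_cutCost_s17 c (mem_sdiff.2 ⟨hxX, hxU⟩) fun hy => hyX (mem_sdiff.1 hy).1
  refine le_of_add_le_add_right (a := cutCost c X) ?_
  calc cutCost c (U \ X) + cutCost c X ≤ cutCost c (U \ X) + cutCost c (X \ U) := by gcongr
    _ ≤ cutCost c U + cutCost c X := cutCost_sdiff_add_cutCost_sdiff_le hsymm U X

end

theorem cut_bending_diff_general [Fintype V] [DecidableEq V] (c cm : V → V → NNReal)
    (hsymm : ∀ x y, c x y = c y x) (b d : V)
    (Δ : NNReal) (hΔ : Δ ≤ c b d)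
    (h_agree : ∀ x y : V, ¬((x = b ∧ y = d) ∨ (x = d ∧ y = b)) → cm x y = c x y)
    (h_bd : cm b d = c b d - Δ) (h_db : cm d b = c b d - Δ)
    (x y : V) (X : Finset V) (hxX : x ∈ X) (hyX : y ∉ X) (hbX : b ∉ X) (hdX : d ∉ X)
    (hXmin : cutCost c X = minCut c x y)
    (U : Finset V) (hUsep : Xor' (b ∈ U) (d ∈ U)) (hxU : x ∉ U) :
    cutCost cm (U \ X) ≤ cutCost cm U := by
  have h_shift {S : Finset V} (hS : Xor (b ∈ S) (d ∈ S)) : cutCost c S = cutCost cm S + Δ :=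
    cutCost_eq_add_of_separates h_agree (by rw [h_bd, tsub_add_cancel_of_le hΔ])
      (by rw [h_db, hsymm, tsub_add_cancel_of_le hΔ]) hS
  have hU_sep : Xor (b ∈ U) (d ∈ U) := hUsep
  have hUX_sep : Xor (b ∈ U \ X) (d ∈ U \ X) := by simpa [hbX, hdX] using hU_sep
  rw [← add_le_add_iff_right Δ, ← h_shift hUX_sep, ← h_shift hU_sep]
  exact cutCost_sdiff_le_of_eq_minCut hsymm hxX hyX hXmin hxU

theorem cut_bending_diff [Fintype V] [DecidableEq V] (c cm : V → V → NNReal)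
    (hsymm : ∀ x y, c x y = c y x) (b d : V) (hbd : b ≠ d)
    (Δ : NNReal) (hΔpos : 0 < Δ) (hΔ : Δ ≤ c b d)
    (h_agree : ∀ x y : V, ¬((x = b ∧ y = d) ∨ (x = d ∧ y = b)) → cm x y = c x y)
    (h_bd : cm b d = c b d - Δ) (h_db : cm d b = c b d - Δ)
    (x y : V) (X : Finset V) (hxX : x ∈ X) (hyX : y ∉ X) (hbX : b ∉ X) (hdX : d ∉ X)
    (hXmin : cutCost c X = minCut c x y)
    (U : Finset V) (hUsep : Xor' (b ∈ U) (d ∈ U)) (hxU : x ∉ U) (hyU : y ∉ U) :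
    cutCost cm (U \ X) ≤ cutCost cm U :=
  cut_bending_diff_general c cm hsymm b d Δ hΔ h_agree h_bd h_db x y X hxX hyX hbX hdX hXmin U hUsep
    hxU
end
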